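/- arXiv:1210.1564 — 5 statements merged into one kernel-verified Lean document; each statement's English description precedes it below -/
import Mathlib

section
/- Let p be an odd prime and P a finite p-group. Then there exists a characteristic subgroup D of P such that every element of D has order dividing p, [D,P] ≤ Z(D), and every automorphism of P of order prime to p which fixes D pointwise is the identity. -/
/-!
Among the characteristic subgroups `H` of `P` with `℧₁(H)` and `[H, P]` central in `H`, take a
maximal one, `C`. Then `C_P(C) ≤ C`: otherwise the image of `C_P(C)` in `P ⧸ C` meets the centre
of `P ⧸ C`, so some element of `C_P(C) \ C` is central of order `p` modulo `C`, and adjoining all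
such elements to `C` contradicts maximality. As `p` is odd and `[C, C]` and `℧₁(C)` are central,
`x ↦ x ^ p` is an endomorphism of `C`, so `D = Ω₁(C)` is a subgroup. A `p'`-automorphism `φ`
fixing `D` fixes `C`, by induction on the order of `x ∈ C`, because `x⁻¹ φ(x)` lies in `D`; it
then fixes every `y ∈ P`, because `y⁻¹ φ(y)` centralizes `C`, hence lies in `C`.
-/

open scoped commutatorElement
open Subgroup

section ClassTwoPower

variable {G : Type*} [Group G] {a b c : G}

theorem pow_mul_eq_mul_pow_mul_pow_of_mul_eq (hba : b * a = a * b * c) (hcb : Commute c b)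
    (n : ℕ) : b ^ n * a = a * b ^ n * c ^ n := by
  have hconj : a⁻¹ * b * a = b * c := by rw [mul_assoc, hba]; group
  have := conj_pow (a := a⁻¹) (b := b) (i := n)
  rw [inv_inv, hconj, hcb.symm.mul_pow] at this
  rw [mul_assoc a, this]; group

theorem mul_pow_eq_mul_pow_mul_pow_choose (hba : b * a = a * b * c) (hca : Commute c a)
    (hcb : Commute c b) (n : ℕ) : (a * b) ^ n = a ^ n * b ^ n * c ^ n.choose 2 := by
  induction n with
  | zero => simp
  | succ n ih =>
    calc (a * b) ^ (n + 1) = a ^ n * b ^ n * (c ^ n.choose 2 * a) * b := by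
          rw [pow_succ, ih]; group
      _ = a ^ n * (b ^ n * a) * (c ^ n.choose 2 * b) := by
          rw [(hca.pow_left _).eq]; group
      _ = a ^ (n + 1) * b ^ n * (c ^ n * b) * c ^ n.choose 2 := by
          rw [pow_mul_eq_mul_pow_mul_pow_of_mul_eq hba hcb, (hcb.pow_left _).eq]; group
      _ = a ^ (n + 1) * b ^ (n + 1) * c ^ (n + 1).choose 2 := by
          rw [(hcb.pow_left _).eq, Nat.choose_succ_succ, Nat.choose_one_right, pow_add]; group

theorem mul_pow_of_odd {p : ℕ} (hp : Odd p) (hba : b * a = a * b * c) (hca : Commute c a)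
    (hcb : Commute c b) (hab : Commute (a ^ p) b) : (a * b) ^ p = a ^ p * b ^ p := by
  have hab' : a * b = b * a * c⁻¹ := by rw [hba]; group
  have hcp : c ^ p = 1 := by
    have h := pow_mul_eq_mul_pow_mul_pow_of_mul_eq hab' hca.inv_left p
    rw [hab.eq, inv_pow] at h
    simpa using h.symm
  obtain ⟨k, rfl⟩ := hp
  have hchoose : (2 * k + 1).choose 2 = (2 * k + 1) * k := by
    rw [Nat.choose_two_right, Nat.add_sub_cancel, Nat.mul_comm _ (2 * k), Nat.mul_assoc,
      Nat.mul_div_cancel_left _ two_pos, Nat.mul_comm]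
  rw [mul_pow_eq_mul_pow_mul_pow_choose hba hca hcb, hchoose, pow_mul, hcp, one_pow, mul_one]

end ClassTwoPower

variable {G : Type*} [Group G]

theorem Subgroup.Characteristic.apply_mem_iff {H : Subgroup G} (hH : H.Characteristic)
    (φ : MulAut G) {x : G} : φ x ∈ H ↔ x ∈ H :=
  SetLike.ext_iff.mp (hH.fixed φ) x

theorem Subgroup.characteristic_of_forall_apply_mem {H : Subgroup G}
    (h : ∀ φ : MulAut G, ∀ x ∈ H, φ x ∈ H) : H.Characteristic :=
  characteristic_iff_le_comap.mpr fun φ x hx => h φ x hx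

theorem Subgroup.inf_centralizer_le_centralizer_sup (H K : Subgroup G) :
    centralizer (H : Set G) ⊓ centralizer K ≤ centralizer (H ⊔ K : Subgroup G) :=
  le_centralizer_iff.mpr <|
    sup_le (le_centralizer_iff.mp inf_le_left) (le_centralizer_iff.mp inf_le_right)

section UpperOmega

variable (N : Subgroup G) [N.Normal] (p : ℕ)

theorem mul_pow_mem_of_mem_upperCentralSeriesStep {a b : G}
    (ha : a ∈ N.upperCentralSeriesStep) (hap : a ^ p ∈ N) (hbp : b ^ p ∈ N) :
    (a * b) ^ p ∈ N := by
  rw [Subgroup.upperCentralSeriesStep_eq_comap_center, mem_comap, mem_center_iff] at ha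
  rw [← QuotientGroup.eq_one_iff] at hap hbp ⊢
  have hab : Commute (a : G ⧸ N) b := (ha b).symm
  rw [QuotientGroup.mk_pow] at hap hbp
  rw [QuotientGroup.mk_pow, QuotientGroup.mk_mul, hab.mul_pow, hap, hbp, one_mul]

/-- The preimage of `Ω₁(Z(G ⧸ N))`. -/
def Subgroup.upperOmegaStep : Subgroup G where
  carrier := {x | x ∈ N.upperCentralSeriesStep ∧ x ^ p ∈ N}
  one_mem' := ⟨one_mem _, by rw [one_pow]; exact one_mem N⟩
  mul_mem' := fun ⟨ha, hap⟩ ⟨hb, hbp⟩ =>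
    ⟨mul_mem ha hb, mul_pow_mem_of_mem_upperCentralSeriesStep N p ha hap hbp⟩
  inv_mem' := fun ⟨ha, hap⟩ => ⟨inv_mem ha, by rw [inv_pow]; exact inv_mem hap⟩

instance [N.Characteristic] : (N.upperOmegaStep p).Characteristic :=
  characteristic_of_forall_apply_mem fun φ _ ⟨hx, hxp⟩ =>
    ⟨(Characteristic.apply_mem_iff inferInstance φ).mpr hx, by
      rw [← map_pow]; exact (Characteristic.apply_mem_iff inferInstance φ).mpr hxp⟩

end UpperOmega

theorem IsPGroup.prime_dvd_card_of_ne_bot {p : ℕ} [Fact p.Prime] (hG : IsPGroup p G) [Finite G]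
    {H : Subgroup G} (hH : H ≠ ⊥) : p ∣ Nat.card H :=
  (hG.to_subgroup H).card_eq_or_dvd.resolve_left (mt card_eq_one.mp hH)

theorem IsPGroup.inf_center_ne_bot {p : ℕ} [Fact p.Prime] (hG : IsPGroup p G) [Finite G]
    {N : Subgroup G} [N.Normal] (hN : N ≠ ⊥) : N ⊓ center G ≠ ⊥ := by
  obtain ⟨x, hx, hx1⟩ :=
    (hG.of_equiv ConjAct.toConjAct).exists_fixed_point_of_prime_dvd_card_of_fixed_point N
      (hG.prime_dvd_card_of_ne_bot hN) (a := 1) fun g => smul_one g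
  refine ne_bot_iff_exists_ne_one.mpr ⟨⟨x, x.2, mem_center_iff.mpr fun g => ?_⟩, ?_⟩
  · have := congrArg Subtype.val (hx (ConjAct.toConjAct g))
    rw [ConjAct.Subgroup.val_conj_smul, ConjAct.smul_def, ConjAct.ofConjAct_toConjAct] at this
    rwa [mul_inv_eq_iff_eq_mul] at this
  · exact fun h => hx1 (Subtype.ext (congrArg Subtype.val h).symm)

theorem IsPGroup.exists_mem_inf_center_orderOf_eq {p : ℕ} [Fact p.Prime] (hG : IsPGroup p G)
    [Finite G] {N : Subgroup G} [N.Normal] (hN : N ≠ ⊥) :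
    ∃ x ∈ N ⊓ center G, orderOf x = p := by
  obtain ⟨x, hx⟩ :=
    exists_prime_orderOf_dvd_card' p (hG.prime_dvd_card_of_ne_bot (hG.inf_center_ne_bot hN))
  exact ⟨x, x.2, by rwa [Subgroup.orderOf_coe]⟩

theorem IsPGroup.exists_mem_upperOmegaStep_notMem {p : ℕ} [Fact p.Prime] (hG : IsPGroup p G)
    [Finite G] {N M : Subgroup G} [N.Normal] [M.Normal] (hMN : ¬M ≤ N) :
    ∃ x ∈ M, x ∉ N ∧ x ∈ N.upperOmegaStep p := by
  have hM : M.map (QuotientGroup.mk' N) ≠ ⊥ := by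
    rwa [Ne, Subgroup.map_eq_bot_iff, QuotientGroup.ker_mk']
  have : (M.map (QuotientGroup.mk' N)).Normal :=
    Normal.map inferInstance _ (QuotientGroup.mk'_surjective N)
  obtain ⟨_, ⟨⟨x, hxM, rfl⟩, hx⟩, hxp⟩ :=
    (hG.to_quotient N).exists_mem_inf_center_orderOf_eq hM
  refine ⟨x, hxM, fun hxN => ?_, ?_, ?_⟩
  · rw [← QuotientGroup.eq_one_iff] at hxN
    rw [QuotientGroup.mk'_apply, hxN, orderOf_one] at hxp
    exact (Fact.out : p.Prime).one_lt.ne hxp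
  · rw [Subgroup.upperCentralSeriesStep_eq_comap_center]; exact hx
  · rw [← QuotientGroup.eq_one_iff, QuotientGroup.mk_pow, ← hxp]; exact pow_orderOf_eq_one _

/-- Thompson's conditions on a critical subgroup except `C_G(H) ≤ H`, and with `℧₁(H) ≤ Z(H)` in
place of `Φ(H) ≤ Z(H)`. -/
structure Subgroup.IsPrecritical (p : ℕ) (H : Subgroup G) : Prop where
  characteristic : H.Characteristic
  pow_mem_centralizer : ∀ x ∈ H, x ^ p ∈ centralizer (H : Set G)
  commutator_mem : ∀ x ∈ H, ∀ g : G, ⁅x, g⁆ ∈ H ⊓ centralizer (H : Set G)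

namespace Subgroup.IsPrecritical

theorem bot (p : ℕ) : IsPrecritical p (⊥ : Subgroup G) where
  characteristic := inferInstance
  pow_mem_centralizer x hx := by rw [mem_bot.mp hx, one_pow]; exact one_mem _
  commutator_mem x hx g := by rw [mem_bot.mp hx, commutatorElement_one_left]; exact one_mem _

variable {p : ℕ} {C : Subgroup G}

theorem mul_pow (hC : IsPrecritical p C) (hp : Odd p) {a b : G} (ha : a ∈ C) (hb : b ∈ C) :
    (a * b) ^ p = a ^ p * b ^ p := by
  have hc := (hC.commutator_mem b⁻¹ (inv_mem hb) a⁻¹).2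
  refine mul_pow_of_odd hp (c := ⁅b⁻¹, a⁻¹⁆) (by rw [commutatorElement_def]; group) ?_ ?_ ?_
  · exact (mem_centralizer_iff.mp hc a ha).symm
  · exact (mem_centralizer_iff.mp hc b hb).symm
  · exact (mem_centralizer_iff.mp (hC.pow_mem_centralizer a ha) b hb).symm

def omegaOne (hC : IsPrecritical p C) (hp : Odd p) : Subgroup G where
  carrier := {x | x ∈ C ∧ x ^ p = 1}
  one_mem' := ⟨one_mem C, one_pow p⟩
  mul_mem' := fun ⟨ha, hap⟩ ⟨hb, hbp⟩ =>
    ⟨mul_mem ha hb, by rw [hC.mul_pow hp ha hb, hap, hbp, one_mul]⟩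
  inv_mem' := fun ⟨ha, hap⟩ => ⟨inv_mem ha, by rw [inv_pow, hap, inv_one]⟩

theorem characteristic_omegaOne (hC : IsPrecritical p C) (hp : Odd p) :
    (hC.omegaOne hp).Characteristic :=
  characteristic_of_forall_apply_mem fun φ _ ⟨hx, hxp⟩ =>
    ⟨(hC.characteristic.apply_mem_iff φ).mpr hx, by rw [← map_pow, hxp, map_one]⟩

theorem commutator_omegaOne_le (hC : IsPrecritical p C) (hp : Odd p) :
    ⁅hC.omegaOne hp, ⊤⁆ ≤ hC.omegaOne hp ⊓ centralizer (hC.omegaOne hp : Set G) := by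
  have := hC.characteristic_omegaOne hp
  rw [commutator_le]
  intro d hd g _
  exact ⟨commutator_le_left _ ⊤ (commutator_mem_commutator hd (mem_top g)),
    centralizer_le (fun _ hx => hx.1) (hC.commutator_mem d hd.1 g).2⟩

theorem sup_upperOmegaStep [C.Normal] (hC : IsPrecritical p C) :
    IsPrecritical p (C ⊔ (centralizer (C : Set G) ⊓ C.upperOmegaStep p)) := by
  have := hC.characteristic
  set Y := centralizer (C : Set G) ⊓ C.upperOmegaStep p
  have hCY : C ≤ centralizer (Y : Set G) := le_centralizer_iff.mp inf_le_left
  have hcenter : C ⊓ centralizer (C : Set G) ≤ centralizer ((C ⊔ Y : Subgroup G) : Set G) :=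
    fun x hx => inf_centralizer_le_centralizer_sup C Y ⟨hx.2, hCY hx.1⟩
  have hdecomp {u : G} (hu : u ∈ C ⊔ Y) : ∃ c ∈ C, ∃ y ∈ Y, c * y = u :=
    mem_sup_of_normal_right.mp hu
  refine ⟨inferInstance, fun u hu => ?_, fun u hu g => ?_⟩
  · obtain ⟨c, hc, y, hy, rfl⟩ := hdecomp hu
    rw [Commute.mul_pow (mem_centralizer_iff.mp hy.1 c hc)]
    exact hcenter (mul_mem ⟨pow_mem hc p, hC.pow_mem_centralizer c hc⟩
      ⟨hy.2.2, pow_mem hy.1 p⟩)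
  · obtain ⟨c, hc, y, hy, rfl⟩ := hdecomp hu
    have hyg : ⁅y, g⁆ ∈ C ⊓ centralizer (C : Set G) :=
      ⟨hy.2.1 g, commutator_le_left _ ⊤ (commutator_mem_commutator hy.1 (mem_top g))⟩
    have hsplit : ⁅c * y, g⁆ = c * ⁅y, g⁆ * c⁻¹ * ⁅c, g⁆ := by
      simp only [commutatorElement_def]; group
    have hmem : ⁅c * y, g⁆ ∈ C ⊓ centralizer (C : Set G) := by
      rw [hsplit]
      exact mul_mem (Normal.conj_mem inferInstance _ hyg c) (hC.commutator_mem c hc g)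
    exact ⟨mem_sup_left hmem.1, hcenter hmem⟩

theorem centralizer_le_of_maximal [Fact p.Prime] [Finite G] (hG : IsPGroup p G)
    (hC : Maximal (IsPrecritical p) C) : centralizer (C : Set G) ≤ C := by
  have := hC.prop.characteristic
  by_contra h
  obtain ⟨x, hxK, hxC, hxY⟩ := hG.exists_mem_upperOmegaStep_notMem h
  exact hxC <| hC.2 hC.1.sup_upperOmegaStep le_sup_left <|
    mem_sup_right (mem_inf.mpr ⟨hxK, hxY⟩)

end Subgroup.IsPrecritical

namespace MulAut

theorem eq_one_of_apply_eq_mul {φ : MulAut G} {x u : G} (hx : φ x = x * u) (hu : φ u = u)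
    (hcop : (orderOf u).Coprime (orderOf φ)) : u = 1 := by
  have hpow (n : ℕ) : (φ ^ n) x = x * u ^ n := by
    induction n with
    | zero => simp
    | succ n ih => rw [pow_succ', mul_apply, ih, map_mul, hx, map_pow, hu, pow_succ', mul_assoc]
  have hu_pow : u ^ orderOf φ = 1 := by
    simpa [pow_orderOf_eq_one] using (hpow (orderOf φ)).symm
  exact orderOf_eq_one_iff.mp (hcop.eq_one_of_dvd (orderOf_dvd_of_pow_eq_one hu_pow))

variable {p : ℕ} {φ : MulAut G}

theorem apply_eq_self_of_forall_pow_eq_one (hG : IsPGroup p G) (hφ : (orderOf φ).Coprime p)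
    {H : Subgroup G} (hH : H.Characteristic)
    (hmul : ∀ a ∈ H, ∀ b ∈ H, (a * b) ^ p = a ^ p * b ^ p)
    (hfix : ∀ x ∈ H, x ^ p = 1 → φ x = x) {x : G} (hx : x ∈ H) : φ x = x := by
  obtain ⟨k, hk⟩ := hG x
  induction k generalizing x with
  | zero => rw [pow_zero, pow_one] at hk; rw [hk, map_one]
  | succ k ih =>
    have hφx : φ x ∈ H := (hH.apply_mem_iff φ).mpr hx
    have hxp : φ (x ^ p) = x ^ p := ih (pow_mem hx p) (by rwa [← pow_mul, ← pow_succ'])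
    have hu : (x⁻¹ * φ x) ^ p = 1 := by
      rw [hmul _ (inv_mem hx) _ hφx, inv_pow, ← map_pow, hxp, inv_mul_cancel]
    have := eq_one_of_apply_eq_mul (mul_inv_cancel_left x (φ x)).symm
      (hfix _ (mul_mem (inv_mem hx) hφx) hu) (hG.orderOf_coprime hφ.symm _)
    rwa [inv_mul_eq_one, eq_comm] at this

theorem eq_one_of_forall_apply_eq_self {N : Subgroup G} [N.Normal]
    (hN : centralizer (N : Set G) ≤ N) (hfix : ∀ x ∈ N, φ x = x)
    (hcop : ∀ u ∈ N, (orderOf u).Coprime (orderOf φ)) : φ = 1 := by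
  ext y
  have hu : y⁻¹ * φ y ∈ N := hN <| mem_centralizer_iff.mpr fun m hm => by
    have h := hfix _ (Normal.conj_mem inferInstance m hm y)
    rw [map_mul, map_mul, map_inv, hfix m hm] at h
    calc m * (y⁻¹ * φ y) = y⁻¹ * (y * m * y⁻¹) * φ y := by group
      _ = y⁻¹ * φ y * m := by rw [← h]; group
  have := eq_one_of_apply_eq_mul (mul_inv_cancel_left y (φ y)).symm (hfix _ hu) (hcop _ hu)
  rw [inv_mul_eq_one, eq_comm] at this
  rw [this, one_apply]

end MulAut

/-- **Thompson-type subgroup for odd `p`.** Every finite `p`-group `P` (`p` odd) has a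
characteristic subgroup `D` of exponent dividing `p` with `[D,P] ≤ Z(D)` such that every
automorphism of `P` of order prime to `p` fixing `D` pointwise is the identity. -/
theorem exists_characteristic_detecting_subgroup_odd
    (p : ℕ) [Fact p.Prime] (hp : Odd p)
    (P : Type) [Group P] [Finite P] (hP : IsPGroup p P) :
    ∃ D : Subgroup P, D.Characteristic ∧ (∀ x ∈ D, x ^ p = 1) ∧
      ⁅D, (⊤ : Subgroup P)⁆ ≤ D ⊓ Subgroup.centralizer (D : Set P) ∧
      ∀ φ : MulAut P, Nat.Coprime (orderOf φ) p → (∀ x ∈ D, φ x = x) → φ = 1 := by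
  obtain ⟨C, hC⟩ := (Set.toFinite {H : Subgroup P | H.IsPrecritical p}).exists_maximal
    ⟨⊥, IsPrecritical.bot p⟩
  have hCp : C.IsPrecritical p := hC.prop
  have := hCp.characteristic
  refine ⟨hCp.omegaOne hp, hCp.characteristic_omegaOne hp, fun x hx => hx.2,
    hCp.commutator_omegaOne_le hp, fun φ hφ hfix => ?_⟩
  have hfixC (x : P) (hx : x ∈ C) : φ x = x :=
    MulAut.apply_eq_self_of_forall_pow_eq_one hP hφ hCp.characteristic
      (fun a ha b hb => hCp.mul_pow hp ha hb) (fun x hx hxp => hfix x ⟨hx, hxp⟩) hx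
  exact MulAut.eq_one_of_forall_apply_eq_self (IsPrecritical.centralizer_le_of_maximal hP hC)
    hfixC fun u _ => hP.orderOf_coprime hφ.symm u
end

section
/- Let p be a prime, P a finite p-group, and D a characteristic subgroup of P such that [D,P] ≤ Z(D) and such that every automorphism of P of order prime to p which fixes D pointwise is the identity. Let A be a maximal element, with respect to inclusion, of the set of abelian subgroups of D. Then A is normal in P, and the subgroup of Aut(P) consisting of all automorphisms of P which fix A pointwise is a p-group. -/
/-!
Since `A` is maximal abelian in `D`, it contains every element of `D` centralizing it, in
particular `D ∩ Z(D)`, hence `[D, P] ≤ A`; so `[A, P] ≤ A` and `A` is normal.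
If a `p'`-automorphism `φ` fixes `A` pointwise, then it fixes every commutator `[x, a]`
with `x ∈ D`, `a ∈ A`, so `c = x⁻¹ φ(x)` centralizes `A` and lies in `A`. Then
`φⁿ(x) = x cⁿ`, and `n = o(φ)` being prime to `p` forces `c = 1`. Thus `φ` fixes `D` and is
trivial, so the pointwise stabilizer of `A` has no nontrivial `p'`-elements, and by Cauchy's
theorem it is a `p`-group.
-/

open scoped commutatorElement

section MaximalAbelian

variable {G : Type*} [Group G] {D A : Subgroup G}

theorem Subgroup.mem_of_forall_commute_of_maximal_abelian (hAD : A ≤ D)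
    (hAab : ∀ x ∈ A, ∀ y ∈ A, x * y = y * x)
    (hAmax : ∀ B : Subgroup G, B ≤ D → (∀ x ∈ B, ∀ y ∈ B, x * y = y * x) →
      A ≤ B → B = A)
    {x : G} (hx : x ∈ D) (hxA : ∀ a ∈ A, Commute x a) : x ∈ A := by
  have hcomm : ∀ s ∈ insert x (A : Set G), ∀ t ∈ insert x (A : Set G), s * t = t * s := by
    rintro s (rfl | hs) t (rfl | ht)
    exacts [rfl, hxA t ht, (hxA s hs).symm, hAab s hs t ht]
  have hB : closure (insert x (A : Set G)) = A := by
    refine hAmax _ ((closure_le _).mpr (Set.insert_subset hx hAD)) (fun b hb c hc => ?_)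
      (fun a ha => subset_closure (Set.mem_insert_of_mem x ha))
    have hcc := closure_le_centralizer_centralizer (insert x (A : Set G))
    exact Set.centralizer_centralizer_comm_of_comm hcomm b (hcc hb) c (hcc hc)
  exact hB ▸ subset_closure (Set.mem_insert x _)

theorem Subgroup.inf_centralizer_le_of_maximal_abelian (hAD : A ≤ D)
    (hAab : ∀ x ∈ A, ∀ y ∈ A, x * y = y * x)
    (hAmax : ∀ B : Subgroup G, B ≤ D → (∀ x ∈ B, ∀ y ∈ B, x * y = y * x) →
      A ≤ B → B = A) :
    D ⊓ centralizer (D : Set G) ≤ A := fun _ ⟨hzD, hzC⟩ =>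
  mem_of_forall_commute_of_maximal_abelian hAD hAab hAmax hzD fun a ha =>
    (mem_centralizer_iff.mp hzC a (hAD ha)).symm

end MaximalAbelian

theorem commute_inv_mul_map_of_map_commutatorElement {G : Type*} [Group G] (φ : G →* G)
    {x a : G} (ha : φ a = a) (hxa : φ ⁅x, a⁆ = ⁅x, a⁆) : Commute (x⁻¹ * φ x) a := by
  rw [map_commutatorElement, ha, commutatorElement_def, commutatorElement_def] at hxa
  have h : φ x * a * (φ x)⁻¹ = x * a * x⁻¹ := mul_right_cancel hxa
  calc x⁻¹ * φ x * a = x⁻¹ * (φ x * a * (φ x)⁻¹) * φ x := by group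
    _ = a * (x⁻¹ * φ x) := by rw [h]; group

theorem MulAut.pow_apply_of_apply_eq_mul {G : Type*} [Group G] (φ : MulAut G) {x c : G}
    (hx : φ x = x * c) (hc : φ c = c) (k : ℕ) : (φ ^ k) x = x * c ^ k := by
  induction k with
  | zero => simp
  | succ k ih =>
    rw [pow_succ', MulAut.mul_apply, ih, map_mul, map_pow, hc, hx, mul_assoc, ← pow_succ']

theorem IsPGroup.eq_one_of_pow_eq_one {p : ℕ} {G : Type*} [Group G] (hG : IsPGroup p G)
    {n : ℕ} (hn : n.Coprime p) {g : G} (hg : g ^ n = 1) : g = 1 :=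
  (hG.powEquiv hn.symm).injective (by simp [hg])

theorem IsPGroup.of_forall_coprime_orderOf {p : ℕ} [Fact p.Prime] {G : Type*} [Group G]
    [Finite G] (h : ∀ g : G, (orderOf g).Coprime p → g = 1) : IsPGroup p G := by
  refine of_card (Nat.eq_prime_pow_of_unique_prime_dvd Nat.card_pos.ne' fun {q} hq hqG => ?_)
  have := Fact.mk hq
  obtain ⟨g, hg⟩ := exists_prime_orderOf_dvd_card' q hqG
  by_contra hqp
  have hg1 : g = 1 := h g (hg ▸ (Nat.coprime_primes hq Fact.out).mpr hqp)
  exact hq.one_lt.ne' (hg ▸ hg1 ▸ orderOf_one)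

theorem MulAut.apply_eq_self_of_fixes_of_coprime_orderOf {p : ℕ} {G : Type*} [Group G]
    (hG : IsPGroup p G) {D A : Subgroup G} (hD : D.Characteristic) (hDA : ⁅D, ⊤⁆ ≤ A)
    (hA : ∀ x ∈ D, (∀ a ∈ A, Commute x a) → x ∈ A) {φ : MulAut G}
    (hφ : (orderOf φ).Coprime p) (hfix : ∀ a ∈ A, φ a = a) {x : G} (hx : x ∈ D) :
    φ x = x := by
  set c := x⁻¹ * φ x
  have hφx : φ x = x * c := (mul_inv_cancel_left x (φ x)).symm
  have hcA : c ∈ A := by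
    have hφxD : φ x ∈ D := by rwa [← hD.fixed φ] at hx
    refine hA c (mul_mem (inv_mem hx) hφxD) fun a ha => ?_
    exact commute_inv_mul_map_of_map_commutatorElement φ.toMonoidHom (hfix a ha)
      (hfix _ (hDA (Subgroup.commutator_mem_commutator hx (Subgroup.mem_top a))))
  have hc : c ^ orderOf φ = 1 := by
    have := pow_apply_of_apply_eq_mul φ hφx (hfix c hcA) (orderOf φ)
    simpa [pow_orderOf_eq_one] using this.symm
  rw [hφx, hG.eq_one_of_pow_eq_one hφ hc, mul_one]

/-- **Maximal abelian subgroups of a detecting subgroup.** If `D` is a characteristic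
subgroup of a finite `p`-group `P` with `[D,P] ≤ Z(D)` detecting `p'`-automorphisms,
and `A` is a maximal abelian subgroup of `D`, then `A ⊴ P` and the automorphisms of `P`
fixing `A` pointwise form a `p`-group. -/
theorem maximal_abelian_subgroup_normal_and_fixing_is_pGroup
    (p : ℕ) [Fact p.Prime]
    (P : Type) [Group P] [Finite P] (hP : IsPGroup p P)
    (D : Subgroup P) (hchar : D.Characteristic)
    (hcomm : ⁅D, (⊤ : Subgroup P)⁆ ≤ D ⊓ Subgroup.centralizer (D : Set P))
    (hdetect : ∀ φ : MulAut P, Nat.Coprime (orderOf φ) p → (∀ x ∈ D, φ x = x) → φ = 1)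
    (A : Subgroup P) (hAD : A ≤ D) (hAab : ∀ x ∈ A, ∀ y ∈ A, x * y = y * x)
    (hAmax : ∀ B : Subgroup P, B ≤ D → (∀ x ∈ B, ∀ y ∈ B, x * y = y * x) →
      A ≤ B → B = A) :
    A.Normal ∧ IsPGroup p (fixingSubgroup (MulAut P) (A : Set P)) := by
  have hDA : ⁅D, ⊤⁆ ≤ A :=
    hcomm.trans (Subgroup.inf_centralizer_le_of_maximal_abelian hAD hAab hAmax)
  have hAnormal : A.Normal :=
    Subgroup.commutator_top_right_le_iff.mp ((Subgroup.commutator_mono hAD le_rfl).trans hDA)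
  refine ⟨hAnormal, IsPGroup.of_forall_coprime_orderOf fun ⟨φ, hφA⟩ hφ => Subtype.ext ?_⟩
  rw [← Subgroup.orderOf_coe] at hφ
  exact hdetect φ hφ fun x hx => MulAut.apply_eq_self_of_fixes_of_coprime_orderOf hP hchar hDA
    (fun y hy => Subgroup.mem_of_forall_commute_of_maximal_abelian hAD hAab hAmax hy) hφ
    (fun a ha => (mem_fixingSubgroup_iff (MulAut P)).mp hφA a ha) hx
end

section
/- Let P be a finite 2-group such that P/Z(P) is elementary abelian. Then (xy)^4 = x^4 y^4 for all x, y ∈ P. In particular, every element of the subgroup Ω_2(P) of P generated by the elements of order dividing 4 itself has order dividing 4, i.e. Ω_2(P) has exponent at most 4. -/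
/-- **Fourth powers in 2-groups with elementary abelian central quotient.**
If `P` is a finite `2`-group with `P/Z(P)` elementary abelian, then
`(xy)^4 = x^4 y^4` for all `x, y ∈ P`; in particular the subgroup `Ω₂(P)`
generated by the elements of order dividing `4` has exponent at most `4`. -/
theorem pow_four_mul_and_omega_two_exponent
    (P : Type) [Group P] [Finite P] (hP : IsPGroup 2 P)
    (hab : ∀ a b : P ⧸ Subgroup.center P, a * b = b * a)
    (hexp : ∀ a : P ⧸ Subgroup.center P, a ^ 2 = 1) :
    (∀ x y : P, (x * y) ^ 4 = x ^ 4 * y ^ 4) ∧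
      (∀ x ∈ Subgroup.closure {y : P | y ^ 4 = 1}, x ^ 4 = 1) := by
  -- every square is central
  have h2 : ∀ z g : P, g * (z * z) = (z * z) * g := by
    intro z g
    have hz : z ^ 2 ∈ Subgroup.center P := by
      rw [← QuotientGroup.eq_one_iff]
      have : ((z ^ 2 : P) : P ⧸ Subgroup.center P) = ((z : P ⧸ Subgroup.center P)) ^ 2 := rfl
      rw [this]
      exact hexp _
    have := Subgroup.mem_center_iff.mp hz g
    simpa [pow_two] using this
  have key : ∀ x y : P, (x * y) ^ 4 = x ^ 4 * y ^ 4 := by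
    intro x y
    -- (xy)² = (yx)²
    have hA : (x * y) * (x * y) = (y * x) * (y * x) := by
      have h := h2 (y * x) x
      have h' : (x * y) * (x * y) * x = (y * x) * (y * x) * x := by
        calc (x * y) * (x * y) * x = x * ((y * x) * (y * x)) := by group
          _ = (y * x) * (y * x) * x := h
      exact mul_right_cancel h'
    -- (xyx)² = x⁴ y²
    have hB : (x * y * x) * (x * y * x) = x ^ 4 * (y * y) := by
      calc (x * y * x) * (x * y * x) = x * (y * (x * x)) * (y * x) := by group
        _ = x * ((x * x) * y) * (y * x) := by rw [h2 x y]
        _ = (x * x * x) * ((y * y) * x) := by group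
        _ = (x * x * x) * (x * (y * y)) := by rw [← h2 y x]
        _ = x ^ 4 * (y * y) := by simp [pow_succ, mul_assoc]
    calc (x * y) ^ 4 = ((x * y) * (x * y)) * ((x * y) * (x * y)) := by simp [pow_succ, mul_assoc]
      _ = ((x * y) * (x * y)) * ((y * x) * (y * x)) := by rw [hA]
      _ = (x * y * x) * ((y * y) * (x * y * x)) := by group
      _ = (x * y * x) * ((x * y * x) * (y * y)) := by rw [← h2 y (x * y * x)]
      _ = ((x * y * x) * (x * y * x)) * (y * y) := by group
      _ = (x ^ 4 * (y * y)) * (y * y) := by rw [hB]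
      _ = x ^ 4 * y ^ 4 := by simp [pow_succ, mul_assoc]
  refine ⟨key, ?_⟩
  intro x hx
  let f : P →* P := MonoidHom.mk' (fun x => x ^ 4) (fun a b => key a b)
  have hle : Subgroup.closure {y : P | y ^ 4 = 1} ≤ f.ker :=
    (Subgroup.closure_le _).mpr (fun y hy => MonoidHom.mem_ker.mpr hy)
  exact MonoidHom.mem_ker.mp (hle hx)
end

section
/- Let P be a finite 2-group such that P/Z(P) is elementary abelian, and let B be a subgroup of Aut(P) of odd order such that every element of B fixes Ω_2(P) pointwise. Then B is the trivial subgroup. Equivalently, every automorphism of P of odd order which fixes every element of P of order dividing 4 is the identity. -/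
/-!
Squares are central in `P`, because `P/Z(P)` has exponent `2`. Let `φ` be an automorphism of odd
order fixing every element of order dividing `4`; since `P` is a `2`-group it suffices to show
that `φ x = x` whenever `φ (x ^ 2) = x ^ 2`. Put `c = x⁻¹ * φ x`. From `(φ x) ^ 2 = x ^ 2` and
the centrality of squares one gets `c ^ 4 = 1`, so `φ c = c`, hence `φ ^ n` sends `x` to
`x * c ^ n`. Taking `n = orderOf φ` gives `c ^ n = 1`, and `n` is prime to `4`, so `c = 1`.
-/

theorem IsPGroup.induction_pow {p : ℕ} {G : Type*} [Group G] (hG : IsPGroup p G)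
    {Q : G → Prop} (one : Q 1) (of_pow : ∀ x, Q (x ^ p) → Q x) (x : G) : Q x := by
  obtain ⟨n, hn⟩ := hG x
  induction n generalizing x with
  | zero => simp_all
  | succ n ih => exact of_pow x (ih (x ^ p) (by rwa [← pow_mul, ← pow_succ']))

section SquaresCentral

variable {G : Type*} [Group G]

theorem pow_two_mem_center_of_exponent_two_quotient
    (h : ∀ a : G ⧸ Subgroup.center G, a ^ 2 = 1) (g : G) : g ^ 2 ∈ Subgroup.center G := by
  rw [← QuotientGroup.eq_one_iff, QuotientGroup.mk_pow]
  exact h g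

theorem pow_four_inv_mul_eq_one_of_sq_eq (hsq : ∀ g : G, g ^ 2 ∈ Subgroup.center G)
    {x y : G} (hxy : x ^ 2 = y ^ 2) : (x⁻¹ * y) ^ 4 = 1 := by
  set k := (x⁻¹ * y) ^ 2
  -- `k` is a square, hence central, and conjugation by `y` multiplies `x` by `k`
  have hk : ∀ g, g * k = k * g := Subgroup.mem_center_iff.mp (hsq _)
  have hconj : y * x * y⁻¹ = x * k := by
    have : x * x = y * y := by simpa only [pow_two] using hxy
    calc y * x * y⁻¹ = y * x⁻¹ * (x * x) * y⁻¹ := by group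
      _ = y * x⁻¹ * (y * y) * y⁻¹ := by rw [this]
      _ = x * k := by simp only [k, pow_two]; group
  have hk2 : x ^ 2 * k ^ 2 = x ^ 2 := by
    calc x ^ 2 * k ^ 2 = (y * x * y⁻¹) ^ 2 := by rw [hconj, Commute.mul_pow (hk x)]
      _ = y * x ^ 2 * y⁻¹ := conj_pow
      _ = x ^ 2 := by rw [Subgroup.mem_center_iff.mp (hsq x) y]; group
  rw [show (4 : ℕ) = 2 * 2 from rfl, pow_mul, mul_eq_left.mp hk2]

theorem MulAut.apply_eq_self_of_apply_sq_eq (hsq : ∀ g : G, g ^ 2 ∈ Subgroup.center G)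
    {φ : MulAut G} (hφ : Odd (orderOf φ)) (hfix : ∀ c : G, c ^ 4 = 1 → φ c = c) {x : G}
    (hx : φ (x ^ 2) = x ^ 2) : φ x = x := by
  set c := x⁻¹ * φ x
  have hc4 : c ^ 4 = 1 := pow_four_inv_mul_eq_one_of_sq_eq hsq (by rw [← map_pow, hx])
  have hφx : φ x = x * c := by simp only [c, mul_inv_cancel_left]
  have hiter : ∀ n : ℕ, (φ ^ n) x = x * c ^ n := by
    intro n
    induction n with
    | zero => simp
    | succ n ih =>
      rw [pow_succ', MulAut.mul_apply, ih, map_mul, hφx, map_pow, hfix c hc4, mul_assoc,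
        ← pow_succ']
  have hcn : c ^ orderOf φ = 1 := by
    simpa only [pow_orderOf_eq_one, MulAut.one_apply, left_eq_mul] using hiter (orderOf φ)
  have hcop : Nat.Coprime (orderOf φ) 4 := (Nat.coprime_two_right.mpr hφ).pow_right 2
  have hc : c = 1 := by simpa [hcop] using pow_gcd_eq_one.mpr ⟨hcn, hc4⟩
  rw [hφx, hc, mul_one]

theorem MulAut.eq_one_of_odd_orderOf_of_fixes_pow_four
    (hsq : ∀ g : G, g ^ 2 ∈ Subgroup.center G) (hG : IsPGroup 2 G) {φ : MulAut G}
    (hφ : Odd (orderOf φ)) (hfix : ∀ c : G, c ^ 4 = 1 → φ c = c) : φ = 1 :=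
  MulEquiv.ext <| hG.induction_pow (map_one φ) fun _ ↦
    MulAut.apply_eq_self_of_apply_sq_eq hsq hφ hfix

end SquaresCentral

theorem odd_automorphism_detected_on_omega_two_general
    (P : Type) [Group P] (hP : IsPGroup 2 P)
    (hexp : ∀ a : P ⧸ Subgroup.center P, a ^ 2 = 1)
    (B : Subgroup (MulAut P)) (hodd : Odd (Nat.card B))
    (hfix : ∀ φ ∈ B, ∀ x ∈ Subgroup.closure {y : P | y ^ 4 = 1}, φ x = x) :
    B = ⊥ ∧
      ∀ φ : MulAut P, Odd (orderOf φ) → (∀ x : P, x ^ 4 = 1 → φ x = x) → φ = 1 := by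
  have hsq := pow_two_mem_center_of_exponent_two_quotient hexp
  refine ⟨(Subgroup.eq_bot_iff_forall B).mpr fun φ hφ ↦ ?_,
    fun φ hφ hfix4 ↦ MulAut.eq_one_of_odd_orderOf_of_fixes_pow_four hsq hP hφ hfix4⟩
  exact MulAut.eq_one_of_odd_orderOf_of_fixes_pow_four hsq hP
    (hodd.of_dvd_nat (B.orderOf_dvd_natCard hφ))
    fun x hx ↦ hfix φ hφ x (Subgroup.subset_closure hx)

/-- **Odd-order automorphisms are detected on `Ω₂(P)`.** Let `P` be a finite `2`-group
with `P/Z(P)` elementary abelian. Any odd-order subgroup `B` of `Aut(P)` fixing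
`Ω₂(P)` pointwise is trivial; equivalently, every odd-order automorphism of `P`
fixing all elements of order dividing `4` is the identity. -/
theorem odd_automorphism_detected_on_omega_two
    (P : Type) [Group P] [Finite P] (hP : IsPGroup 2 P)
    (hab : ∀ a b : P ⧸ Subgroup.center P, a * b = b * a)
    (hexp : ∀ a : P ⧸ Subgroup.center P, a ^ 2 = 1)
    (B : Subgroup (MulAut P)) (hodd : Odd (Nat.card B))
    (hfix : ∀ φ ∈ B, ∀ x ∈ Subgroup.closure {y : P | y ^ 4 = 1}, φ x = x) :
    B = ⊥ ∧
      ∀ φ : MulAut P, Odd (orderOf φ) → (∀ x : P, x ^ 4 = 1 → φ x = x) → φ = 1 :=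
  odd_automorphism_detected_on_omega_two_general P hP hexp B hodd hfix
end

section
/- Let p be a prime, G a finite group, S a Sylow p-subgroup of G, and Q ⊴ P ≤ S. Assume that P is fully normalized, i.e. |N_S(P)| ≥ |N_S(gPg⁻¹)| for every g ∈ G with gPg⁻¹ ≤ S, and that C_S(gQg⁻¹) ≤ P for every g ∈ N_G(P). Then Q is fully centralized, i.e. |C_S(Q)| ≥ |C_S(gQg⁻¹)| for every g ∈ G with gQg⁻¹ ≤ S. -/
/-- The conjugate `gPg⁻¹` of a subgroup. -/
def conjSub {G : Type} [Group G] (g : G) (P : Subgroup G) : Subgroup G :=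
  Subgroup.map (MulAut.conj g).toMonoidHom P

/-!
Put `Z = C_G(Q)`; it is normalized by `N_G(Q)`, which contains `P`. Take a Sylow `p`-subgroup
`U` of `N_G(Q)` containing `P`. Then `T = U ∩ Z` is a Sylow `p`-subgroup of `Z`, and
`C_S(gQg⁻¹)` is conjugate to a `p`-subgroup of `Z`, so `|C_S(gQg⁻¹)| ≤ |T|`.

Since `P` is fully normalized, `S ∩ N_G(P)` is a Sylow `p`-subgroup of `N_G(P)`. Hence any
`p`-subgroup of `Z ∩ N_G(P)` is moved by some `n ∈ N_G(P)` into `S ∩ C_G(nQn⁻¹) ≤ P`, and so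
already lies in `P`. In particular `T ∩ N_G(P) ≤ P`. As `T` is normal in the nilpotent group
`U ⊇ P`, this forces `T ≤ P ≤ S`, whence `|T| ≤ |C_S(Q)|`.
-/

open Subgroup
open scoped commutatorElement

namespace Subgroup

variable {G : Type*} [Group G]

theorem card_subgroupOf_of_le {D K : Subgroup G} (h : D ≤ K) :
    Nat.card (D.subgroupOf K) = Nat.card D := by
  rw [← card_subtype K, map_subgroupOf_eq_of_le h]

/-- Induction along the upper central series: an element of `T ∩ ζₙ₊₁(G)` has its commutators
with `P` in `T ∩ ζₙ(G) ≤ P`, so it normalizes `P`. -/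
theorem le_of_inf_normalizer_le [Group.IsNilpotent G] {P T : Subgroup G} [hT : T.Normal]
    (h : T ⊓ normalizer (P : Set G) ≤ P) : T ≤ P := by
  suffices key : ∀ n, T ⊓ upperCentralSeries G n ≤ P by
    obtain ⟨n, hn⟩ := Group.IsNilpotent.nilpotent G
    simpa [hn] using key n
  intro n
  induction n with
  | zero => simp [upperCentralSeries_zero]
  | succ n ih =>
    have conj_mem : ∀ t ∈ T ⊓ upperCentralSeries G (n + 1), ∀ x ∈ P, t * x * t⁻¹ ∈ P := by
      rintro t ⟨htT, htZ⟩ x hx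
      have hcomm : ⁅t, x⁆ ∈ T ⊓ upperCentralSeries G n := by
        refine mem_inf.mpr ⟨?_, mem_upperCentralSeries_succ_iff.mp htZ x⟩
        simpa only [commutatorElement_def, mul_assoc] using
          T.mul_mem htT (hT.conj_mem _ (inv_mem htT) x)
      simpa [commutatorElement_def] using P.mul_mem (ih hcomm) hx
    intro t ht
    refine h ⟨ht.1, mem_normalizer_iff.mpr fun x => ⟨conj_mem t ht x, fun hx => ?_⟩⟩
    simpa [mul_assoc] using conj_mem t⁻¹ (inv_mem ht) _ hx

theorem le_of_inf_normalizer_le_of_le {U P T : Subgroup G}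
    [Group.IsNilpotent U] (hPU : P ≤ U) (hTU : T ≤ U) (hUT : U ≤ normalizer (T : Set G))
    (h : T ⊓ normalizer (P : Set G) ≤ P) : T ≤ P := by
  have : (T.subgroupOf U).Normal := (normal_subgroupOf_iff_le_normalizer hTU).mpr hUT
  have hle : T.subgroupOf U ≤ P.subgroupOf U := by
    refine le_of_inf_normalizer_le fun x ⟨hxT, hxN⟩ => h ⟨hxT, ?_⟩
    rw [← subgroupOf_normalizer_eq hPU] at hxN
    exact hxN
  exact fun t ht => hle (show (⟨t, hTU ht⟩ : U) ∈ T.subgroupOf U from ht)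

end Subgroup

section Conjugation

variable {G : Type} [Group G] {g : G} {H K : Subgroup G}

theorem mem_conjSub {y : G} : y ∈ conjSub g H ↔ ∃ x ∈ H, g * x * g⁻¹ = y := by
  simp only [conjSub, mem_map, MulEquiv.coe_toMonoidHom, MulAut.conj_apply]

theorem conjSub_le_iff : conjSub g H ≤ K ↔ ∀ x ∈ H, g * x * g⁻¹ ∈ K := by
  rw [conjSub, map_le_iff_le_comap]
  rfl

theorem card_conjSub (g : G) (H : Subgroup G) : Nat.card (conjSub g H) = Nat.card H :=
  card_map_of_injective (MulAut.conj g).injective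

theorem conjSub_mono (h : H ≤ K) : conjSub g H ≤ conjSub g K := map_mono h

theorem conjSub_eq_of_mem_normalizer (hg : g ∈ normalizer (H : Set G)) : conjSub g H = H :=
  mem_normalizer_iff_map_conj_eq.mp hg

theorem conjSub_inv_conjSub (g : G) (H : Subgroup G) : conjSub g⁻¹ (conjSub g H) = H := by
  ext x
  simp [mem_conjSub, mul_assoc]

theorem conjSub_normalizer_le :
    conjSub g (normalizer (H : Set G)) ≤ normalizer (conjSub g H : Set G) :=
  le_normalizer_map _

theorem conjSub_centralizer_le :
    conjSub g (centralizer (H : Set G)) ≤ centralizer (conjSub g H : Set G) := by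
  simpa only [conjSub, coe_map] using map_centralizer_le_centralizer_image _ _

theorem isPGroup_conjSub {p : ℕ} (hH : IsPGroup p H) : IsPGroup p (conjSub g H) := hH.map _

end Conjugation

section SylowOf

variable {p : ℕ} [Fact p.Prime] {G : Type} [Group G] [Finite G]

theorem Sylow.exists_conjSub_le (S : Sylow p G) {D : Subgroup G} (hD : IsPGroup p D) :
    ∃ g : G, conjSub g D ≤ S := by
  obtain ⟨S', hS'⟩ := hD.exists_le_sylow
  obtain ⟨g, rfl⟩ := MulAction.exists_smul_eq G S' S
  refine ⟨g, conjSub_le_iff.mpr fun x hx => ?_⟩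
  rw [Sylow.coe_subgroup_smul]
  exact smul_mem_pointwise_smul x (MulAut.conj g) _ (hS' hx)

/-- `H` is a `p`-subgroup of `K` of maximal order; in a finite group these are exactly the
Sylow `p`-subgroups of `K`. -/
structure IsSylowOf (p : ℕ) (K H : Subgroup G) : Prop where
  le : H ≤ K
  isPGroup : IsPGroup p H
  card_le : ∀ D ≤ K, IsPGroup p D → Nat.card D ≤ Nat.card H

theorem exists_isSylowOf_ge {K P : Subgroup G} (hP : IsPGroup p P) (hPK : P ≤ K) :
    ∃ H, IsSylowOf p K H ∧ P ≤ H := by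
  obtain ⟨R, hR⟩ := (hP.comap_subtype (K := K)).exists_le_sylow
  refine ⟨(R : Subgroup K).map K.subtype, ⟨map_subtype_le _, R.isPGroup'.map _, ?_⟩, ?_⟩
  · intro D hDK hD
    obtain ⟨R', hR'⟩ := (hD.comap_subtype (K := K)).exists_le_sylow
    calc Nat.card D = Nat.card (D.subgroupOf K) := (card_subgroupOf_of_le hDK).symm
      _ ≤ Nat.card R' := card_le_of_le hR'
      _ = Nat.card R := by rw [Sylow.card_eq_multiplicity, Sylow.card_eq_multiplicity]
      _ = _ := (card_subtype K R).symm
  · calc P = (P.subgroupOf K).map K.subtype := (map_subgroupOf_eq_of_le hPK).symm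
      _ ≤ _ := map_mono hR

namespace IsSylowOf

variable {K H : Subgroup G}

theorem exists_conjSub_le (hH : IsSylowOf p K H) {D : Subgroup G} (hDK : D ≤ K)
    (hD : IsPGroup p D) : ∃ k ∈ K, conjSub k D ≤ H := by
  obtain ⟨R, hR⟩ := (hH.isPGroup.comap_subtype (K := K)).exists_le_sylow
  have hHR : H.subgroupOf K = R := by
    refine eq_of_le_of_card_ge hR ?_
    rw [card_subgroupOf_of_le hH.le, ← card_subtype K R]
    exact hH.card_le _ (map_subtype_le _) (R.isPGroup'.map _)
  obtain ⟨k, hk⟩ := R.exists_conjSub_le (hD.comap_subtype (K := K))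
  refine ⟨k, k.2, conjSub_le_iff.mpr fun x hx => ?_⟩
  have hkx := conjSub_le_iff.mp hk ⟨x, hDK hx⟩ hx
  rw [← hHR] at hkx
  exact hkx

theorem inf_of_le_normalizer (hH : IsSylowOf p K H) {Z : Subgroup G} (hZK : Z ≤ K)
    (hKZ : K ≤ normalizer (Z : Set G)) : IsSylowOf p Z (H ⊓ Z) where
  le := inf_le_right
  isPGroup := hH.isPGroup.to_inf_left
  card_le D hDZ hD := by
    obtain ⟨k, hk, hkD⟩ := hH.exists_conjSub_le (hDZ.trans hZK) hD
    have hkDZ : conjSub k D ≤ Z := by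
      simpa only [conjSub_eq_of_mem_normalizer (hKZ hk)] using conjSub_mono (g := k) hDZ
    rw [← card_conjSub k D]
    exact card_le_of_le (le_inf hkD hkDZ)

end IsSylowOf

end SylowOf

def IsFullyNormalized {p : ℕ} {G : Type} [Group G] (S : Sylow p G) (P : Subgroup G) : Prop :=
  ∀ g : G, (∀ x ∈ P, g * x * g⁻¹ ∈ (S : Subgroup G)) →
    Nat.card ((S : Subgroup G) ⊓ normalizer (conjSub g P : Set G) : Subgroup G) ≤
      Nat.card ((S : Subgroup G) ⊓ normalizer (P : Set G) : Subgroup G)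

section FullyNormalized

variable {p : ℕ} [Fact p.Prime] {G : Type} [Group G] [Finite G] {S : Sylow p G} {P Q : Subgroup G}

theorem IsFullyNormalized.isSylowOf_inf_normalizer (hPS : P ≤ S) (hP : IsFullyNormalized S P) :
    IsSylowOf p (normalizer (P : Set G)) (S ⊓ normalizer (P : Set G)) where
  le := inf_le_right
  isPGroup := S.isPGroup'.to_inf_left
  card_le D hDN hD := by
    obtain ⟨x, hx⟩ := S.exists_conjSub_le (hD.to_sup_of_normal_right' (S.isPGroup'.to_le hPS) hDN)
    have hxP : conjSub x P ≤ S := (conjSub_mono le_sup_right).trans hx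
    have hxN : conjSub x (D ⊔ P) ≤ normalizer (conjSub x P : Set G) :=
      (conjSub_mono (sup_le hDN le_normalizer)).trans conjSub_normalizer_le
    calc Nat.card D ≤ Nat.card (D ⊔ P : Subgroup G) := card_le_of_le le_sup_left
      _ = Nat.card (conjSub x (D ⊔ P)) := (card_conjSub x _).symm
      _ ≤ Nat.card (S ⊓ normalizer (conjSub x P : Set G) : Subgroup G) :=
          card_le_of_le (le_inf hx hxN)
      _ ≤ _ := hP x (conjSub_le_iff.mp hxP)

theorem le_of_le_centralizer_inf_normalizer
    (hSN : IsSylowOf p (normalizer (P : Set G)) (S ⊓ normalizer (P : Set G)))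
    (hcent : ∀ g ∈ normalizer (P : Set G),
      (S : Subgroup G) ⊓ centralizer (conjSub g Q : Set G) ≤ P)
    {D : Subgroup G} (hD : IsPGroup p D) (hDC : D ≤ centralizer (Q : Set G))
    (hDN : D ≤ normalizer (P : Set G)) : D ≤ P := by
  obtain ⟨n, hn, hnD⟩ := hSN.exists_conjSub_le hDN hD
  have hnDP : conjSub n D ≤ P :=
    (le_inf (hnD.trans inf_le_left) ((conjSub_mono hDC).trans conjSub_centralizer_le)).trans
      (hcent n hn)
  simpa only [conjSub_inv_conjSub, conjSub_eq_of_mem_normalizer (inv_mem hn)] using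
    conjSub_mono (g := n⁻¹) hnDP

end FullyNormalized

theorem fully_centralized_of_centralizers_le_general
    (p : ℕ) [Fact p.Prime] (G : Type) [Group G] [Finite G]
    (S : Sylow p G) (P Q : Subgroup G) (hPS : P ≤ (S : Subgroup G))
    (hQnormal : ∀ g ∈ P, ∀ x ∈ Q, g * x * g⁻¹ ∈ Q)
    (hfullnorm : ∀ g : G, (∀ x ∈ P, g * x * g⁻¹ ∈ (S : Subgroup G)) →
      Nat.card ((S : Subgroup G) ⊓ Subgroup.normalizer ((conjSub g P : Subgroup G) : Set G) : Subgroup G) ≤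
        Nat.card ((S : Subgroup G) ⊓ Subgroup.normalizer ((P : Subgroup G) : Set G) : Subgroup G))
    (hcent : ∀ g ∈ Subgroup.normalizer ((P : Subgroup G) : Set G),
      (S : Subgroup G) ⊓ Subgroup.centralizer ((conjSub g Q : Subgroup G) : Set G) ≤ P) :
    ∀ g : G, (∀ x ∈ Q, g * x * g⁻¹ ∈ (S : Subgroup G)) →
      Nat.card ((S : Subgroup G) ⊓ Subgroup.centralizer ((conjSub g Q : Subgroup G) : Set G) : Subgroup G) ≤
        Nat.card ((S : Subgroup G) ⊓ Subgroup.centralizer ((Q : Subgroup G) : Set G) : Subgroup G) := by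
  intro g _
  have hPQ : P ≤ normalizer (Q : Set G) := fun x hx => mem_normalizer_fintype (hQnormal x hx)
  have hCQ := centralizer_le_normalizer (Q : Set G)
  have hQC := le_normalizer_of_normal_subgroupOf hCQ
  obtain ⟨U, hU, hPU⟩ := exists_isSylowOf_ge (S.isPGroup'.to_le hPS) hPQ
  have hUC := hU.inf_of_le_normalizer hCQ hQC
  have : Group.IsNilpotent U := hU.isPGroup.isNilpotent
  have hSN : IsSylowOf p (normalizer (P : Set G)) (S ⊓ normalizer (P : Set G)) :=
    IsFullyNormalized.isSylowOf_inf_normalizer hPS hfullnorm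
  have hUCN : U ⊓ centralizer (Q : Set G) ⊓ normalizer (P : Set G) ≤ P :=
    le_of_le_centralizer_inf_normalizer hSN hcent hUC.isPGroup.to_inf_left
      (inf_le_left.trans inf_le_right) inf_le_right
  have hUCP : U ⊓ centralizer (Q : Set G) ≤ P :=
    le_of_inf_normalizer_le_of_le hPU inf_le_left
      ((le_inf le_normalizer (hU.le.trans hQC)).trans inf_normalizer_le_normalizer_inf) hUCN
  have hgC : conjSub g⁻¹ ((S : Subgroup G) ⊓ centralizer (conjSub g Q : Set G)) ≤
      centralizer (Q : Set G) := by
    refine (conjSub_mono inf_le_right).trans ?_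
    simpa only [conjSub_inv_conjSub] using conjSub_centralizer_le (g := g⁻¹) (H := conjSub g Q)
  calc Nat.card ((S : Subgroup G) ⊓ centralizer (conjSub g Q : Set G) : Subgroup G)
      = Nat.card (conjSub g⁻¹ ((S : Subgroup G) ⊓ centralizer (conjSub g Q : Set G))) :=
        (card_conjSub _ _).symm
    _ ≤ Nat.card (U ⊓ centralizer (Q : Set G) : Subgroup G) :=
        hUC.card_le _ hgC (isPGroup_conjSub S.isPGroup'.to_inf_left)
    _ ≤ _ := card_le_of_le (le_inf (hUCP.trans hPS) inf_le_right)

/-- **Fully centralized criterion.** Let `S` be a Sylow `p`-subgroup of the finite group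
`G` and `Q ⊴ P ≤ S`. If `P` is fully normalized and `C_S(gQg⁻¹) ≤ P` for every
`g ∈ N_G(P)`, then `Q` is fully centralized. -/
theorem fully_centralized_of_centralizers_le
    (p : ℕ) [Fact p.Prime] (G : Type) [Group G] [Finite G]
    (S : Sylow p G) (P Q : Subgroup G) (hPS : P ≤ (S : Subgroup G))
    (hQP : Q ≤ P) (hQnormal : ∀ g ∈ P, ∀ x ∈ Q, g * x * g⁻¹ ∈ Q)
    (hfullnorm : ∀ g : G, (∀ x ∈ P, g * x * g⁻¹ ∈ (S : Subgroup G)) →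
      Nat.card ((S : Subgroup G) ⊓ Subgroup.normalizer ((conjSub g P : Subgroup G) : Set G) : Subgroup G) ≤
        Nat.card ((S : Subgroup G) ⊓ Subgroup.normalizer ((P : Subgroup G) : Set G) : Subgroup G))
    (hcent : ∀ g ∈ Subgroup.normalizer ((P : Subgroup G) : Set G),
      (S : Subgroup G) ⊓ Subgroup.centralizer ((conjSub g Q : Subgroup G) : Set G) ≤ P) :
    ∀ g : G, (∀ x ∈ Q, g * x * g⁻¹ ∈ (S : Subgroup G)) →
      Nat.card ((S : Subgroup G) ⊓ Subgroup.centralizer ((conjSub g Q : Subgroup G) : Set G) : Subgroup G) ≤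
        Nat.card ((S : Subgroup G) ⊓ Subgroup.centralizer ((Q : Subgroup G) : Set G) : Subgroup G) :=
  fully_centralized_of_centralizers_le_general p G S P Q hPS hQnormal hfullnorm hcent
end
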